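/- Let (M, Ω) be a measurable space, H a separable Hilbert space, (V_j : M → H)_{j∈ℕ} measurable functions, and for each x ∈ M set H_x to be the closed linear span of {V_j(x) : j ∈ ℕ}. Then for every measurable Y : M → H, the map x ↦ proj_{H_x} Y(x) is measurable. -/

import Mathlib

open scoped InnerProductSpace
open Filter Topology Submodule InnerProductSpace

/-!
Pointwise in `x`, apply Gram–Schmidt to `(V j x)_j`. The Gram–Schmidt vectors depend measurably
on `x`, and the projection onto the span of the first `n + 1` of the `V j x` is the sum of the
rank-one projections onto the first `n + 1` Gram–Schmidt vectors, hence measurable in `x`. As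
`n → ∞` these projections converge strongly to the projection onto `H_x`, and a pointwise limit of
measurable maps into a metrizable space is measurable.
-/

section Projection

variable {𝕜 E ι : Type*} [RCLike 𝕜] [NormedAddCommGroup E] [InnerProductSpace 𝕜 E]

theorem starProjection_closure_span_eq_sum_of_orthogonal [CompleteSpace E] {u : ι → E}
    (hu : Pairwise fun i j => ⟪u i, u j⟫_𝕜 = 0) (s : Finset ι) (y : E) :
    (span 𝕜 (u '' s)).topologicalClosure.starProjection y =
      ∑ i ∈ s, (𝕜 ∙ u i).starProjection y := by
  classical
  apply eq_starProjection_of_mem_orthogonal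
  · refine Submodule.sum_mem _ fun i hi => le_topologicalClosure _ ?_
    exact span_mono (Set.singleton_subset_iff.2 (Set.mem_image_of_mem u hi)) (coe_mem _)
  rw [orthogonal_closure]
  refine isOrtho_span.2 ?_ (mem_span_singleton_self _)
  rintro _ rfl _ ⟨j, hj, rfl⟩
  have hproj_orth : ∀ i ∈ s.erase j, ⟪(𝕜 ∙ u i).starProjection y, u j⟫_𝕜 = 0 := fun i hi => by
    rw [starProjection_singleton, inner_smul_left, hu (Finset.ne_of_mem_erase hi), mul_zero]
  rw [← Finset.add_sum_erase _ _ hj, ← sub_sub, inner_sub_left, sum_inner,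
    mem_orthogonal_singleton_iff_inner_left.1 (sub_starProjection_mem_orthogonal y),
    Finset.sum_eq_zero hproj_orth, sub_zero]

theorem starProjection_closure_span_Iic_eq_sum_gramSchmidt [CompleteSpace E] (f : ℕ → E) (n : ℕ)
    (y : E) :
    (span 𝕜 (f '' Set.Iic n)).topologicalClosure.starProjection y =
      ∑ i ∈ Finset.Iic n, (𝕜 ∙ gramSchmidt 𝕜 f i).starProjection y := by
  rw [← starProjection_closure_span_eq_sum_of_orthogonal (gramSchmidt_pairwise_orthogonal 𝕜 f),
    Finset.coe_Iic, span_gramSchmidt_Iic]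

theorem tendsto_starProjection_closure_span_Iic [CompleteSpace E] (f : ℕ → E) (y : E) :
    Tendsto (fun n => (span 𝕜 (f '' Set.Iic n)).topologicalClosure.starProjection y) atTop
      (𝓝 ((span 𝕜 (Set.range f)).topologicalClosure.starProjection y)) := by
  set U : ℕ → Submodule 𝕜 E := fun n => (span 𝕜 (f '' Set.Iic n)).topologicalClosure
  have hU : Monotone U := fun m n hmn =>
    topologicalClosure_mono (span_mono (Set.image_mono (Set.Iic_subset_Iic.2 hmn)))
  have hsup : (⨆ n, U n).topologicalClosure = (span 𝕜 (Set.range f)).topologicalClosure := by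
    refine le_antisymm (topologicalClosure_minimal _ (iSup_le fun n => ?_)
      (isClosed_topologicalClosure _)) (topologicalClosure_mono (span_le.2 ?_))
    · exact topologicalClosure_mono (span_mono (Set.image_subset_range _ _))
    · rintro _ ⟨j, rfl⟩
      exact le_iSup U j (le_topologicalClosure _ (subset_span ⟨j, Set.self_mem_Iic, rfl⟩))
  simpa only [hsup] using starProjection_tendsto_closure_iSup U hU y

end Projection

section Measurability

variable {𝕜 E α : Type*} [RCLike 𝕜] [NormedAddCommGroup E] [InnerProductSpace 𝕜 E]
  [MeasurableSpace E] [BorelSpace E] [SecondCountableTopology E] [MeasurableSpace α]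

theorem Measurable.starProjection_span_singleton {v w : α → E} (hv : Measurable v)
    (hw : Measurable w) : Measurable fun x => (𝕜 ∙ v x).starProjection (w x) := by
  let : MeasurableSpace 𝕜 := borel 𝕜
  have : BorelSpace 𝕜 := ⟨rfl⟩
  simp_rw [starProjection_singleton]
  exact ((hv.inner hw).div (RCLike.measurable_ofReal.comp (hv.norm.pow_const 2))).smul hv

theorem Measurable.gramSchmidt {ι : Type*} [LinearOrder ι] [LocallyFiniteOrderBot ι]
    [WellFoundedLT ι] {f : ι → α → E} (hf : ∀ i, Measurable (f i)) (n : ι) :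
    Measurable fun x => gramSchmidt 𝕜 (fun i => f i x) n := by
  induction n using WellFoundedLT.induction with
  | _ n ih =>
    simp_rw [gramSchmidt_def 𝕜 _ n]
    exact (hf n).sub <| Finset.measurable_sum _ fun i hi =>
      (ih i (Finset.mem_Iio.1 hi)).starProjection_span_singleton (hf n)

end Measurability

/-- If `(V j)` are measurable maps into a separable Hilbert space and `H_x` is the closed
linear span of `{V j x : j ∈ ℕ}`, then for measurable `Y` the map
`x ↦ proj_{H_x} (Y x)` is measurable. -/
theorem stmt_2 {𝕜 : Type*} [RCLike 𝕜] {H : Type*} [NormedAddCommGroup H]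
    [InnerProductSpace 𝕜 H] [CompleteSpace H] [SecondCountableTopology H]
    [MeasurableSpace H] [BorelSpace H]
    {M : Type*} [MeasurableSpace M] (V : ℕ → M → H) (hV : ∀ j, Measurable (V j))
    (Y : M → H) (hY : Measurable Y) :
    Measurable fun x : M =>
      (Submodule.orthogonalProjection
        ((Submodule.span 𝕜 (Set.range fun j : ℕ => V j x)).topologicalClosure) (Y x) : H) := by
  have hfinite : ∀ n, Measurable fun x =>
      (span 𝕜 ((fun j => V j x) '' Set.Iic n)).topologicalClosure.starProjection (Y x) := by
    intro n
    simp_rw [starProjection_closure_span_Iic_eq_sum_gramSchmidt]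
    exact Finset.measurable_sum _ fun i _ =>
      (Measurable.gramSchmidt hV i).starProjection_span_singleton hY
  exact measurable_of_tendsto_metrizable' atTop hfinite
    (tendsto_pi_nhds.2 fun x => tendsto_starProjection_closure_span_Iic _ (Y x))
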